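/- arXiv:1103.2490 — 5 statements merged into one kernel-verified Lean document; each statement's English description precedes it below -/
import Mathlib

section
/- Suppose all entries of Γ are nonnegative, the OSNR targets satisfy γ_i · (Σ_{j∈N} Γ_{ij}) < 1 with γ_i > 0 for every i ∈ N₂, and the parameters satisfy a_i > Σ_{j≠i, j∈N} Γ_{ij} for every i ∈ N₁. Then the stacked matrix Γ̄ is strictly diagonally dominant, i.e., |Γ̄_{ii}| > Σ_{j≠i} |Γ̄_{ij}| for every row i ∈ {1,…,N}. -/
open Matrix Finset Filter Topology

section Defs

variable {m n : ℕ}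

/-- Γ̃ ∈ ℝ^{m×N}: rows of the game players. Γ̃_{ii} = a_i, Γ̃_{ij} = Γ_{ij} for j ≠ i. -/
def GammaTilde (Γ : Matrix (Fin m ⊕ Fin n) (Fin m ⊕ Fin n) ℝ) (a : Fin m → ℝ) :
    Matrix (Fin m) (Fin m ⊕ Fin n) ℝ :=
  Matrix.of fun i j => if j = Sum.inl i then a i else Γ (Sum.inl i) j

/-- Γ̂ ∈ ℝ^{n×N}: rows of the target seekers. Γ̂_{kk} = 1 - γ_kΓ_{kk}, Γ̂_{kj} = -γ_kΓ_{kj}. -/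
def GammaHat (Γ : Matrix (Fin m ⊕ Fin n) (Fin m ⊕ Fin n) ℝ) (γ : Fin n → ℝ) :
    Matrix (Fin n) (Fin m ⊕ Fin n) ℝ :=
  Matrix.of fun k j =>
    if j = Sum.inr k then 1 - γ k * Γ (Sum.inr k) (Sum.inr k) else -(γ k * Γ (Sum.inr k) j)

/-- Γ̄ ∈ ℝ^{N×N}: Γ̃ stacked above Γ̂. -/
def GammaBar (Γ : Matrix (Fin m ⊕ Fin n) (Fin m ⊕ Fin n) ℝ) (a : Fin m → ℝ) (γ : Fin n → ℝ) :
    Matrix (Fin m ⊕ Fin n) (Fin m ⊕ Fin n) ℝ :=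
  Matrix.fromRows (GammaTilde Γ a) (GammaHat Γ γ)

/-- b̃ ∈ ℝ^m: b̃_i = a_iβ_i/α_i - n_{0,i}. -/
noncomputable def bTilde (n0 : Fin m ⊕ Fin n → ℝ) (α β a : Fin m → ℝ) : Fin m → ℝ :=
  fun i => a i * β i / α i - n0 (Sum.inl i)

/-- b̂ ∈ ℝ^n: b̂_k = γ_k n_{0,k}. -/
def bHat (n0 : Fin m ⊕ Fin n → ℝ) (γ : Fin n → ℝ) : Fin n → ℝ :=
  fun k => γ k * n0 (Sum.inr k)

/-- b̄ ∈ ℝ^N: b̃ stacked above b̂. -/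
noncomputable def bBar (n0 : Fin m ⊕ Fin n → ℝ) (α β a : Fin m → ℝ) (γ : Fin n → ℝ) : Fin m ⊕ Fin n → ℝ :=
  Sum.elim (bTilde n0 α β a) (bHat n0 γ)

/-- max norm of a vector -/
noncomputable def vecNormInf {ι : Type*} [Fintype ι] (v : ι → ℝ) : ℝ := ⨆ i, |v i|

/-- induced ∞-norm of a matrix: max absolute row sum -/
noncomputable def matNormInf {ι κ : Type*} [Fintype ι] [Fintype κ] (A : Matrix ι κ ℝ) : ℝ :=
  ⨆ i, ∑ j, |A i j|

/-- iteration map of the distributed algorithm -/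
noncomputable def iterMap (Γ : Matrix (Fin m ⊕ Fin n) (Fin m ⊕ Fin n) ℝ)
    (n0 : Fin m ⊕ Fin n → ℝ) (α β a : Fin m → ℝ) (γ : Fin n → ℝ) :
    (Fin m ⊕ Fin n → ℝ) → (Fin m ⊕ Fin n → ℝ) := fun u =>
  Sum.elim
    (fun i => β i / α i -
      (1 / a i) * (n0 (Sum.inl i) + ∑ j ∈ univ.erase (Sum.inl i), Γ (Sum.inl i) j * u j))
    (fun k => (γ k / (1 - γ k * Γ (Sum.inr k) (Sum.inr k))) *
      (n0 (Sum.inr k) + ∑ j ∈ univ.erase (Sum.inr k), Γ (Sum.inr k) j * u j))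

end Defs

section RowDominance

variable {m n : ℕ} (Γ : Matrix (Fin m ⊕ Fin n) (Fin m ⊕ Fin n) ℝ) (a : Fin m → ℝ)
  (γ : Fin n → ℝ)

theorem gammaBar_inl_self (i : Fin m) : GammaBar Γ a γ (Sum.inl i) (Sum.inl i) = a i := by
  simp [GammaBar, GammaTilde]

theorem gammaBar_inl_of_ne {i : Fin m} {j : Fin m ⊕ Fin n} (hj : j ≠ Sum.inl i) :
    GammaBar Γ a γ (Sum.inl i) j = Γ (Sum.inl i) j := by
  simp [GammaBar, GammaTilde, hj]

theorem gammaBar_inr_self (k : Fin n) :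
    GammaBar Γ a γ (Sum.inr k) (Sum.inr k) = 1 - γ k * Γ (Sum.inr k) (Sum.inr k) := by
  simp [GammaBar, GammaHat]

theorem gammaBar_inr_of_ne {k : Fin n} {j : Fin m ⊕ Fin n} (hj : j ≠ Sum.inr k) :
    GammaBar Γ a γ (Sum.inr k) j = -(γ k * Γ (Sum.inr k) j) := by
  simp [GammaBar, GammaHat, hj]

theorem sum_erase_abs_gammaBar_inl_lt {i : Fin m} (hΓ : ∀ j, 0 ≤ Γ (Sum.inl i) j)
    (ha : ∑ j ∈ univ.erase (Sum.inl i), Γ (Sum.inl i) j < a i) :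
    ∑ j ∈ univ.erase (Sum.inl i), |GammaBar Γ a γ (Sum.inl i) j|
      < |GammaBar Γ a γ (Sum.inl i) (Sum.inl i)| :=
  calc ∑ j ∈ univ.erase (Sum.inl i), |GammaBar Γ a γ (Sum.inl i) j|
      = ∑ j ∈ univ.erase (Sum.inl i), Γ (Sum.inl i) j := sum_congr rfl fun j hj => by
        rw [gammaBar_inl_of_ne Γ a γ (ne_of_mem_erase hj), abs_of_nonneg (hΓ j)]
    _ < a i := ha
    _ ≤ |GammaBar Γ a γ (Sum.inl i) (Sum.inl i)| := by
      rw [gammaBar_inl_self]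
      exact le_abs_self _

theorem sum_erase_abs_gammaBar_inr_lt {k : Fin n} (hΓ : ∀ j, 0 ≤ Γ (Sum.inr k) j)
    (hγpos : 0 ≤ γ k) (hγ : γ k * ∑ j, Γ (Sum.inr k) j < 1) :
    ∑ j ∈ univ.erase (Sum.inr k), |GammaBar Γ a γ (Sum.inr k) j|
      < |GammaBar Γ a γ (Sum.inr k) (Sum.inr k)| :=
  calc ∑ j ∈ univ.erase (Sum.inr k), |GammaBar Γ a γ (Sum.inr k) j|
      = γ k * ∑ j ∈ univ.erase (Sum.inr k), Γ (Sum.inr k) j := by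
        rw [mul_sum]
        refine sum_congr rfl fun j hj => ?_
        rw [gammaBar_inr_of_ne Γ a γ (ne_of_mem_erase hj), abs_neg,
          abs_of_nonneg (mul_nonneg hγpos (hΓ j))]
    _ = γ k * ∑ j, Γ (Sum.inr k) j - γ k * Γ (Sum.inr k) (Sum.inr k) := by
      rw [sum_erase_eq_sub (mem_univ _), mul_sub]
    _ < 1 - γ k * Γ (Sum.inr k) (Sum.inr k) := sub_lt_sub_right hγ _
    _ ≤ |GammaBar Γ a γ (Sum.inr k) (Sum.inr k)| := by
      rw [gammaBar_inr_self]
      exact le_abs_self _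

end RowDominance

theorem statement2_general (m n : ℕ)
    (Γ : Matrix (Fin m ⊕ Fin n) (Fin m ⊕ Fin n) ℝ) (hΓ : ∀ i j, 0 ≤ Γ i j)
    (a : Fin m → ℝ) (γ : Fin n → ℝ)
    (hγpos : ∀ k, 0 < γ k)
    (hγ : ∀ k : Fin n, γ k * ∑ j, Γ (Sum.inr k) j < 1)
    (ha : ∀ i : Fin m, ∑ j ∈ univ.erase (Sum.inl i), Γ (Sum.inl i) j < a i) :
    ∀ i : Fin m ⊕ Fin n,
      ∑ j ∈ univ.erase i, |GammaBar Γ a γ i j| < |GammaBar Γ a γ i i| := by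
  rintro (i | k)
  · exact sum_erase_abs_gammaBar_inl_lt Γ a γ (hΓ _) (ha i)
  · exact sum_erase_abs_gammaBar_inr_lt Γ a γ (hΓ _) (hγpos k).le (hγ k)

/-- Under nonnegativity of Γ, γ_i(Σ_j Γ_{ij}) < 1 for target seekers and
a_i > Σ_{j≠i} Γ_{ij} for game players, the stacked matrix Γ̄ is strictly diagonally
dominant: |Γ̄_{ii}| > Σ_{j≠i} |Γ̄_{ij}| for every row i. -/
theorem statement2 (m n : ℕ) (hm : 0 < m) (hn : 0 < n)
    (Γ : Matrix (Fin m ⊕ Fin n) (Fin m ⊕ Fin n) ℝ) (hΓ : ∀ i j, 0 ≤ Γ i j)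
    (a : Fin m → ℝ) (γ : Fin n → ℝ)
    (hapos : ∀ i, 0 < a i) (hγpos : ∀ k, 0 < γ k)
    (hγ : ∀ k : Fin n, γ k * ∑ j, Γ (Sum.inr k) j < 1)
    (ha : ∀ i : Fin m, ∑ j ∈ univ.erase (Sum.inl i), Γ (Sum.inl i) j < a i) :
    ∀ i : Fin m ⊕ Fin n,
      ∑ j ∈ univ.erase i, |GammaBar Γ a γ i j| < |GammaBar Γ a γ i i| :=
  statement2_general m n Γ hΓ a γ hγpos hγ ha
end

section
/- Suppose all entries of Γ are nonnegative, γ_i · (Σ_{j∈N} Γ_{ij}) < 1 with γ_i > 0 for every i ∈ N₂, and a_i > Σ_{j≠i, j∈N} Γ_{ij} for every i ∈ N₁. Then Γ̄ is invertible, and u* = Γ̄⁻¹ b̄ is the unique vector satisfying simultaneously Γ̃u* = b̃ and Γ̂u* = b̂; in particular u* belongs to the feasible set F = {u : Γ̃u = b̃, Γ̂u ≥ b̂}. -/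
open Matrix Finset Filter Topology

/-!
The matrix Γ̄ is strictly row diagonally dominant: on a player row the diagonal `a i`
exceeds the off-diagonal sum by assumption, and on a target row `1 - γ_k Γ_kk` exceeds
`γ_k ∑_{j ≠ k} Γ_kj` because `γ_k ∑_j Γ_kj < 1`. Gershgorin's theorem then makes Γ̄ invertible, and
the two block equations `Γ̃u = b̃`, `Γ̂u = b̂` are exactly the single system `Γ̄u = b̄`.
-/

theorem Matrix.mulVec_eq_iff_eq_inv_mulVec {ι K : Type*} [Fintype ι] [DecidableEq ι] [Field K]
    {A : Matrix ι ι K} (hA : IsUnit A) {u b : ι → K} :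
    A *ᵥ u = b ↔ u = A⁻¹ *ᵥ b := by
  have hdet : IsUnit A.det := (Matrix.isUnit_iff_isUnit_det A).1 hA
  constructor
  · rintro rfl
    rw [mulVec_mulVec, nonsing_inv_mul A hdet, one_mulVec]
  · rintro rfl
    rw [mulVec_mulVec, mul_nonsing_inv A hdet, one_mulVec]

theorem Matrix.isUnit_of_sum_row_lt_diag {ι K : Type*} [Fintype ι] [DecidableEq ι]
    [NormedField K] {A : Matrix ι ι K} (h : ∀ k, ∑ j ∈ univ.erase k, ‖A k j‖ < ‖A k k‖) :
    IsUnit A :=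
  (Matrix.isUnit_iff_isUnit_det A).2 (det_ne_zero_of_sum_row_lt_diag h).isUnit

section GammaBar

variable {m n : ℕ} {Γ : Matrix (Fin m ⊕ Fin n) (Fin m ⊕ Fin n) ℝ} {a : Fin m → ℝ}
  {γ : Fin n → ℝ}

theorem gammaBar_mulVec_eq_bBar_iff (n0 : Fin m ⊕ Fin n → ℝ) (α β : Fin m → ℝ)
    (u : Fin m ⊕ Fin n → ℝ) :
    (GammaBar Γ a γ).mulVec u = bBar n0 α β a γ ↔
      (GammaTilde Γ a).mulVec u = bTilde n0 α β a ∧ (GammaHat Γ γ).mulVec u = bHat n0 γ := by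
  rw [GammaBar, fromRows_mulVec, bBar, Sum.elim_eq_iff]

variable (hΓ : ∀ i j, 0 ≤ Γ i j)
include hΓ

theorem sum_row_lt_diag_gammaTilde
    (ha : ∀ i, ∑ j ∈ univ.erase (Sum.inl i), Γ (Sum.inl i) j < a i) (i : Fin m) :
    ∑ j ∈ univ.erase (Sum.inl i), |GammaTilde Γ a i j| < |GammaTilde Γ a i (Sum.inl i)| := by
  have hoff : ∀ j ∈ univ.erase (Sum.inl i), |GammaTilde Γ a i j| = Γ (Sum.inl i) j := by
    intro j hj
    simp [GammaTilde, (mem_erase.1 hj).1, abs_of_nonneg (hΓ _ _)]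
  have ha_pos : 0 < a i := (sum_nonneg fun j _ => hΓ _ j).trans_lt (ha i)
  rw [sum_congr rfl hoff]
  simpa [GammaTilde, abs_of_pos ha_pos] using ha i

theorem sum_row_lt_diag_gammaHat (hγpos : ∀ k, 0 < γ k)
    (hγ : ∀ k, γ k * ∑ j, Γ (Sum.inr k) j < 1) (k : Fin n) :
    ∑ j ∈ univ.erase (Sum.inr k), |GammaHat Γ γ k j| < |GammaHat Γ γ k (Sum.inr k)| := by
  have hoff : ∀ j ∈ univ.erase (Sum.inr k), |GammaHat Γ γ k j| = γ k * Γ (Sum.inr k) j := by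
    intro j hj
    simp [GammaHat, (mem_erase.1 hj).1, abs_mul, abs_of_pos (hγpos k), abs_of_nonneg (hΓ _ _)]
  have hdiag_le : γ k * Γ (Sum.inr k) (Sum.inr k) ≤ γ k * ∑ j, Γ (Sum.inr k) j :=
    mul_le_mul_of_nonneg_left (single_le_sum (fun j _ => hΓ _ j) (mem_univ _)) (hγpos k).le
  have hdiag : GammaHat Γ γ k (Sum.inr k) = 1 - γ k * Γ (Sum.inr k) (Sum.inr k) := by
    simp [GammaHat]
  rw [sum_congr rfl hoff, ← mul_sum, sum_erase_eq_sub (mem_univ _), hdiag,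
    abs_of_pos (by linarith [hγ k])]
  linarith [hγ k]

theorem isUnit_gammaBar (hγpos : ∀ k, 0 < γ k) (hγ : ∀ k, γ k * ∑ j, Γ (Sum.inr k) j < 1)
    (ha : ∀ i, ∑ j ∈ univ.erase (Sum.inl i), Γ (Sum.inl i) j < a i) :
    IsUnit (GammaBar Γ a γ) := by
  refine Matrix.isUnit_of_sum_row_lt_diag ?_
  rintro (i | k)
  · simpa [GammaBar] using sum_row_lt_diag_gammaTilde hΓ ha i
  · simpa [GammaBar] using sum_row_lt_diag_gammaHat hΓ hγpos hγ k

end GammaBar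

theorem statement3_general (m n : ℕ)
    (Γ : Matrix (Fin m ⊕ Fin n) (Fin m ⊕ Fin n) ℝ) (hΓ : ∀ i j, 0 ≤ Γ i j)
    (n0 : Fin m ⊕ Fin n → ℝ) (α β a : Fin m → ℝ) (γ : Fin n → ℝ)
    (hγpos : ∀ k, 0 < γ k)
    (hγ : ∀ k : Fin n, γ k * ∑ j, Γ (Sum.inr k) j < 1)
    (ha : ∀ i : Fin m, ∑ j ∈ univ.erase (Sum.inl i), Γ (Sum.inl i) j < a i) :
    IsUnit (GammaBar Γ a γ) ∧
    (∀ u : Fin m ⊕ Fin n → ℝ,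
      ((GammaTilde Γ a).mulVec u = bTilde n0 α β a ∧
        (GammaHat Γ γ).mulVec u = bHat n0 γ) ↔
      u = (GammaBar Γ a γ)⁻¹.mulVec (bBar n0 α β a γ)) ∧
    ((GammaTilde Γ a).mulVec ((GammaBar Γ a γ)⁻¹.mulVec (bBar n0 α β a γ)) =
        bTilde n0 α β a ∧
      ∀ k, bHat n0 γ k ≤
        (GammaHat Γ γ).mulVec ((GammaBar Γ a γ)⁻¹.mulVec (bBar n0 α β a γ)) k) := by
  have hunit := isUnit_gammaBar hΓ hγpos hγ ha
  have hsolve : ∀ u, ((GammaTilde Γ a).mulVec u = bTilde n0 α β a ∧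
      (GammaHat Γ γ).mulVec u = bHat n0 γ) ↔
      u = (GammaBar Γ a γ)⁻¹.mulVec (bBar n0 α β a γ) := fun u =>
    (gammaBar_mulVec_eq_bBar_iff n0 α β u).symm.trans (mulVec_eq_iff_eq_inv_mulVec hunit)
  obtain ⟨htilde, hhat⟩ := (hsolve _).2 rfl
  exact ⟨hunit, hsolve, htilde, fun k => (congrFun hhat k).ge⟩

/-- Under the diagonal-dominance hypotheses, Γ̄ is invertible and
u* = Γ̄⁻¹b̄ is the unique vector with Γ̃u* = b̃ and Γ̂u* = b̂; in particular u* is in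
the feasible set F = {u : Γ̃u = b̃, Γ̂u ≥ b̂}. -/
theorem statement3 (m n : ℕ) (hm : 0 < m) (hn : 0 < n)
    (Γ : Matrix (Fin m ⊕ Fin n) (Fin m ⊕ Fin n) ℝ) (hΓ : ∀ i j, 0 ≤ Γ i j)
    (n0 : Fin m ⊕ Fin n → ℝ) (α β a : Fin m → ℝ) (γ : Fin n → ℝ)
    (hαpos : ∀ i, 0 < α i) (hβpos : ∀ i, 0 < β i) (hapos : ∀ i, 0 < a i)
    (hγpos : ∀ k, 0 < γ k)
    (hγ : ∀ k : Fin n, γ k * ∑ j, Γ (Sum.inr k) j < 1)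
    (ha : ∀ i : Fin m, ∑ j ∈ univ.erase (Sum.inl i), Γ (Sum.inl i) j < a i) :
    IsUnit (GammaBar Γ a γ) ∧
    (∀ u : Fin m ⊕ Fin n → ℝ,
      ((GammaTilde Γ a).mulVec u = bTilde n0 α β a ∧
        (GammaHat Γ γ).mulVec u = bHat n0 γ) ↔
      u = (GammaBar Γ a γ)⁻¹.mulVec (bBar n0 α β a γ)) ∧
    ((GammaTilde Γ a).mulVec ((GammaBar Γ a γ)⁻¹.mulVec (bBar n0 α β a γ)) =
        bTilde n0 α β a ∧
      ∀ k, bHat n0 γ k ≤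
        (GammaHat Γ γ).mulVec ((GammaBar Γ a γ)⁻¹.mulVec (bBar n0 α β a γ)) k) :=
  statement3_general m n Γ hΓ n0 α β a γ hγpos hγ ha
end

section
/- Suppose all entries of Γ are nonnegative, γ_k · (Σ_{j∈N} Γ_{kj}) < 1 with γ_k > 0 for every k ∈ N₂, a_i > Σ_{j≠i,j∈N} Γ_{ij} with a_i > 0 for every i ∈ N₁, and a_i + Σ_{j≠i,j∈N} Γ_{ij} > 2 − 2γ_kΓ_{kk} for all i ∈ N₁ and k ∈ N₂. Then the induced ∞-norm of Γ̄ (maximum absolute row sum) satisfies ‖Γ̄‖_∞ = max_{i∈N₁} (a_i + Σ_{j≠i,j∈N} Γ_{ij}), and consequently max_{i∈N₁} a_i ≤ ‖Γ̄‖_∞ ≤ 2 · max_{i∈N₁} a_i. -/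
open Matrix Finset Filter Topology

/-! With nonnegative `Γ`, every absolute row sum of `Γ̄` is explicit. A target-seeker row sums to
`1 + γ_k Σ_j Γ_kj - 2γ_kΓ_kk < 2 - 2γ_kΓ_kk`, which by the last hypothesis is below every player
row sum, so the norm is the largest player row sum `a_i + Σ_{j≠i} Γ_ij ∈ [a_i, 2a_i)`. -/

theorem ciSup_sum_eq_ciSup_inl {ι κ : Type*} [Finite ι] [Finite κ] [Nonempty ι] (f : ι ⊕ κ → ℝ)
    (hdom : ∀ k, ∃ i, f (Sum.inr k) ≤ f (Sum.inl i)) :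
    ⨆ x, f x = ⨆ i, f (Sum.inl i) := by
  have hbdd : BddAbove (Set.range fun i => f (Sum.inl i)) := Finite.bddAbove_range _
  apply le_antisymm
  · refine ciSup_le ?_
    rintro (i | k)
    · exact le_ciSup hbdd i
    · obtain ⟨i, hi⟩ := hdom k
      exact hi.trans (le_ciSup hbdd i)
  · exact ciSup_le fun i => le_ciSup (Finite.bddAbove_range f) (Sum.inl i)

section GammaBarRows

variable {m n : ℕ} (Γ : Matrix (Fin m ⊕ Fin n) (Fin m ⊕ Fin n) ℝ) (a : Fin m → ℝ) (γ : Fin n → ℝ)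

theorem GammaBar_rowSum_inl {i : Fin m} (hΓ : ∀ j, 0 ≤ Γ (Sum.inl i) j) (ha : 0 < a i) :
    ∑ j, |GammaBar Γ a γ (Sum.inl i) j| =
      a i + ∑ j ∈ univ.erase (Sum.inl i), Γ (Sum.inl i) j := by
  rw [← add_sum_erase univ _ (mem_univ (Sum.inl i))]
  congr 1
  · simp [GammaBar, GammaTilde, abs_of_pos ha]
  · refine sum_congr rfl fun j hj => ?_
    simp [GammaBar, GammaTilde, ne_of_mem_erase hj, abs_of_nonneg (hΓ j)]

theorem GammaBar_rowSum_inr {k : Fin n} (hΓ : ∀ j, 0 ≤ Γ (Sum.inr k) j) (hγ : 0 ≤ γ k)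
    (hdiag : γ k * Γ (Sum.inr k) (Sum.inr k) ≤ 1) :
    ∑ j, |GammaBar Γ a γ (Sum.inr k) j| =
      1 + γ k * ∑ j, Γ (Sum.inr k) j - 2 * (γ k * Γ (Sum.inr k) (Sum.inr k)) := by
  have hoff : ∑ j ∈ univ.erase (Sum.inr k), |GammaBar Γ a γ (Sum.inr k) j| =
      γ k * ∑ j ∈ univ.erase (Sum.inr k), Γ (Sum.inr k) j := by
    rw [mul_sum]
    refine sum_congr rfl fun j hj => ?_
    simp [GammaBar, GammaHat, ne_of_mem_erase hj, abs_of_nonneg (mul_nonneg hγ (hΓ j))]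
  have hdiag' : |GammaBar Γ a γ (Sum.inr k) (Sum.inr k)| =
      1 - γ k * Γ (Sum.inr k) (Sum.inr k) := by
    simp [GammaBar, GammaHat, abs_of_nonneg (sub_nonneg.mpr hdiag)]
  rw [← add_sum_erase univ _ (mem_univ (Sum.inr k)), hoff, hdiag',
    ← add_sum_erase univ (Γ (Sum.inr k)) (mem_univ (Sum.inr k))]
  ring

end GammaBarRows

theorem statement8_general (m n : ℕ) (hm : 0 < m)
    (Γ : Matrix (Fin m ⊕ Fin n) (Fin m ⊕ Fin n) ℝ) (hΓ : ∀ i j, 0 ≤ Γ i j)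
    (a : Fin m → ℝ) (γ : Fin n → ℝ)
    (hapos : ∀ i, 0 < a i) (hγpos : ∀ k, 0 < γ k)
    (hγ : ∀ k : Fin n, γ k * ∑ j, Γ (Sum.inr k) j < 1)
    (ha : ∀ i : Fin m, ∑ j ∈ univ.erase (Sum.inl i), Γ (Sum.inl i) j < a i)
    (hTS : ∀ (i : Fin m) (k : Fin n),
      2 - 2 * γ k * Γ (Sum.inr k) (Sum.inr k) <
        a i + ∑ j ∈ univ.erase (Sum.inl i), Γ (Sum.inl i) j) :
    matNormInf (GammaBar Γ a γ) =
      (⨆ i : Fin m, a i + ∑ j ∈ univ.erase (Sum.inl i), Γ (Sum.inl i) j) ∧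
    (⨆ i : Fin m, a i) ≤ matNormInf (GammaBar Γ a γ) ∧
    matNormInf (GammaBar Γ a γ) ≤ 2 * ⨆ i : Fin m, a i := by
  have hplayers : Nonempty (Fin m) := Fin.pos_iff_nonempty.mp hm
  set f : Fin m → ℝ := fun i => a i + ∑ j ∈ univ.erase (Sum.inl i), Γ (Sum.inl i) j
  have hoff : ∀ i, 0 ≤ ∑ j ∈ univ.erase (Sum.inl i), Γ (Sum.inl i) j :=
    fun i => sum_nonneg fun j _ => hΓ _ j
  have hnorm : matNormInf (GammaBar Γ a γ) = ⨆ i, f i := by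
    have hdiag (k : Fin n) : γ k * Γ (Sum.inr k) (Sum.inr k) ≤ γ k * ∑ j, Γ (Sum.inr k) j :=
      mul_le_mul_of_nonneg_left (single_le_sum (fun j _ => hΓ _ j) (mem_univ _)) (hγpos k).le
    unfold matNormInf
    rw [ciSup_sum_eq_ciSup_inl]
    · exact congrArg iSup (funext fun i => GammaBar_rowSum_inl Γ a γ (hΓ _) (hapos i))
    · intro k
      obtain ⟨i⟩ := hplayers
      refine ⟨i, ?_⟩
      rw [GammaBar_rowSum_inl Γ a γ (hΓ _) (hapos i),
        GammaBar_rowSum_inr Γ a γ (hΓ _) (hγpos k).le ((hdiag k).trans (hγ k).le)]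
      linarith [hTS i k, hγ k]
  refine ⟨hnorm, ?_, ?_⟩ <;> rw [hnorm]
  · exact ciSup_mono (Finite.bddAbove_range f) fun i => le_add_of_nonneg_right (hoff i)
  · rw [Real.mul_iSup_of_nonneg zero_le_two]
    exact ciSup_mono (Finite.bddAbove_range _) fun i => by linarith [ha i]

/-- ‖Γ̄‖_∞ = max_{i∈N₁}(a_i + Σ_{j≠i}Γ_{ij}), and consequently
max_{i∈N₁} a_i ≤ ‖Γ̄‖_∞ ≤ 2 max_{i∈N₁} a_i. -/
theorem statement8 (m n : ℕ) (hm : 0 < m) (hn : 0 < n)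
    (Γ : Matrix (Fin m ⊕ Fin n) (Fin m ⊕ Fin n) ℝ) (hΓ : ∀ i j, 0 ≤ Γ i j)
    (a : Fin m → ℝ) (γ : Fin n → ℝ)
    (hapos : ∀ i, 0 < a i) (hγpos : ∀ k, 0 < γ k)
    (hγ : ∀ k : Fin n, γ k * ∑ j, Γ (Sum.inr k) j < 1)
    (ha : ∀ i : Fin m, ∑ j ∈ univ.erase (Sum.inl i), Γ (Sum.inl i) j < a i)
    (hTS : ∀ (i : Fin m) (k : Fin n),
      2 - 2 * γ k * Γ (Sum.inr k) (Sum.inr k) <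
        a i + ∑ j ∈ univ.erase (Sum.inl i), Γ (Sum.inl i) j) :
    matNormInf (GammaBar Γ a γ) =
      (⨆ i : Fin m, a i + ∑ j ∈ univ.erase (Sum.inl i), Γ (Sum.inl i) j) ∧
    (⨆ i : Fin m, a i) ≤ matNormInf (GammaBar Γ a γ) ∧
    matNormInf (GammaBar Γ a γ) ≤ 2 * ⨆ i : Fin m, a i :=
  statement8_general m n hm Γ hΓ a γ hapos hγpos hγ ha hTS
end

section
/- Suppose all entries of Γ are nonnegative, a_i > Σ_{j≠i,j∈N} Γ_{ij} with a_i > 0 for i ∈ N₁, and γ_i · (Σ_{j∈N} Γ_{ij}) < 1 with γ_i > 0 for i ∈ N₂. Let σ = max{ max_{i∈N₁} (Σ_{j≠i,j∈N} Γ_{ij})/a_i , max_{i∈N₂} (γ_i Σ_{j≠i,j∈N} Γ_{ij})/(1 − γ_iΓ_{ii}) }. Then σ < 1, and if u* satisfies Γ̄u* = b̄, the iteration map T satisfies ‖T(u) − u*‖_∞ ≤ σ‖u − u*‖_∞ for all u ∈ ℝ^N, i.e., T is a contraction in the max norm around u*. -/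
/-!
Subtracting the fixed-point equation `T u* = u*` (which is `Γ̄ u* = b̄` rearranged row by row)
from `T u` leaves, in row `p`, the off-diagonal part of row `p` of `Γ` applied to `u - u*`,
scaled by `-1/a_i` or by `γ_k / (1 - γ_k Γ_kk)`. With `Γ ≥ 0` its absolute value is at most
the scaled off-diagonal row sum times `‖u - u*‖_∞`, and those scaled row sums are exactly the
quantities whose maximum is `σ`; the diagonal dominance hypotheses make each of them `< 1`.
-/

open Matrix Finset Filter Topology

section MaxNorm

variable {ι : Type*} [Fintype ι]

lemma abs_le_vecNormInf (v : ι → ℝ) (i : ι) : |v i| ≤ vecNormInf v :=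
  le_ciSup (f := fun i => |v i|) (Set.finite_range _).bddAbove i

lemma vecNormInf_nonneg (v : ι → ℝ) : 0 ≤ vecNormInf v :=
  Real.iSup_nonneg fun i => abs_nonneg (v i)

lemma vecNormInf_le {v : ι → ℝ} {c : ℝ} (hc : 0 ≤ c) (h : ∀ i, |v i| ≤ c) :
    vecNormInf v ≤ c :=
  Real.iSup_le h hc

lemma abs_sum_mul_le_sum_mul_vecNormInf {w : ι → ℝ} (hw : ∀ j, 0 ≤ w j) (s : Finset ι)
    (v : ι → ℝ) : |∑ j ∈ s, w j * v j| ≤ (∑ j ∈ s, w j) * vecNormInf v :=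
  calc |∑ j ∈ s, w j * v j|
      ≤ ∑ j ∈ s, |w j * v j| := abs_sum_le_sum_abs _ _
    _ ≤ ∑ j ∈ s, w j * vecNormInf v := by
        gcongr with j
        rw [abs_mul, abs_of_nonneg (hw j)]
        exact mul_le_mul_of_nonneg_left (abs_le_vecNormInf v j) (hw j)
    _ = (∑ j ∈ s, w j) * vecNormInf v := (sum_mul _ _ _).symm

lemma vecNormInf_scaled_offDiag_le [DecidableEq ι] {Γ : Matrix ι ι ℝ} (hΓ : ∀ i j, 0 ≤ Γ i j)
    {c : ι → ℝ} {σ : ℝ} (hσ : 0 ≤ σ) (hrow : ∀ p, |c p| * ∑ j ∈ univ.erase p, Γ p j ≤ σ)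
    (w : ι → ℝ) :
    vecNormInf (fun p => c p * ∑ j ∈ univ.erase p, Γ p j * w j) ≤ σ * vecNormInf w := by
  refine vecNormInf_le (mul_nonneg hσ (vecNormInf_nonneg w)) fun p => ?_
  calc |c p * ∑ j ∈ univ.erase p, Γ p j * w j|
      ≤ |c p| * ((∑ j ∈ univ.erase p, Γ p j) * vecNormInf w) := by
        rw [abs_mul]
        exact mul_le_mul_of_nonneg_left
          (abs_sum_mul_le_sum_mul_vecNormInf (hΓ p) _ w) (abs_nonneg _)
    _ ≤ σ * vecNormInf w := by
        rw [← mul_assoc]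
        exact mul_le_mul_of_nonneg_right (hrow p) (vecNormInf_nonneg w)

end MaxNorm

lemma mul_sum_erase_lt_one_sub {ι : Type*} [Fintype ι] [DecidableEq ι] {r : ι → ℝ} {g : ℝ}
    (h : g * ∑ j, r j < 1) (p : ι) : g * ∑ j ∈ univ.erase p, r j < 1 - g * r p := by
  rw [← add_sum_erase _ _ (mem_univ p), mul_add] at h
  linarith

lemma Real.iSup_lt_of_forall_lt {ι : Type*} [Finite ι] {f : ι → ℝ} {c : ℝ} (hc : 0 < c)
    (h : ∀ i, f i < c) : ⨆ i, f i < c := by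
  rcases isEmpty_or_nonempty ι with hι | hι
  · simpa using hc
  · obtain ⟨i, hi⟩ := Finite.exists_max f
    exact (ciSup_le hi).trans_lt (h i)

section IterMap

variable {m n : ℕ} (Γ : Matrix (Fin m ⊕ Fin n) (Fin m ⊕ Fin n) ℝ) (n0 : Fin m ⊕ Fin n → ℝ)
  (α β a : Fin m → ℝ) (γ : Fin n → ℝ)

noncomputable def iterMapCoeff : Fin m ⊕ Fin n → ℝ :=
  Sum.elim (fun i => -(1 / a i)) (fun k => γ k / (1 - γ k * Γ (Sum.inr k) (Sum.inr k)))

lemma iterMap_sub_iterMap (u v : Fin m ⊕ Fin n → ℝ) (p : Fin m ⊕ Fin n) :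
    iterMap Γ n0 α β a γ u p - iterMap Γ n0 α β a γ v p =
      iterMapCoeff Γ a γ p * ∑ j ∈ univ.erase p, Γ p j * (u j - v j) := by
  simp only [mul_sub, sum_sub_distrib]
  cases p <;> simp only [iterMap, iterMapCoeff, Sum.elim_inl, Sum.elim_inr] <;> ring

lemma GammaBar_mulVec_inl (u : Fin m ⊕ Fin n → ℝ) (i : Fin m) :
    (GammaBar Γ a γ *ᵥ u) (Sum.inl i) =
      a i * u (Sum.inl i) + ∑ j ∈ univ.erase (Sum.inl i), Γ (Sum.inl i) j * u j := by
  simp only [GammaBar, mulVec, dotProduct, fromRows_apply_inl, GammaTilde, of_apply]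
  rw [← add_sum_erase _ _ (mem_univ (Sum.inl i)), if_pos rfl]
  congr 1
  exact sum_congr rfl fun j hj => by rw [if_neg (ne_of_mem_erase hj)]

lemma GammaBar_mulVec_inr (u : Fin m ⊕ Fin n → ℝ) (k : Fin n) :
    (GammaBar Γ a γ *ᵥ u) (Sum.inr k) =
      (1 - γ k * Γ (Sum.inr k) (Sum.inr k)) * u (Sum.inr k) -
        γ k * ∑ j ∈ univ.erase (Sum.inr k), Γ (Sum.inr k) j * u j := by
  simp only [GammaBar, mulVec, dotProduct, fromRows_apply_inr, GammaHat, of_apply]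
  rw [← add_sum_erase _ _ (mem_univ (Sum.inr k)), if_pos rfl, mul_sum, sub_eq_add_neg (_ * _),
    ← sum_neg_distrib]
  congr 1
  exact sum_congr rfl fun j hj => by rw [if_neg (ne_of_mem_erase hj), neg_mul, mul_assoc]

variable {Γ a γ} in
lemma abs_iterMapCoeff_inl_mul {i : Fin m} (hi : 0 < a i) (s : ℝ) :
    |iterMapCoeff Γ a γ (Sum.inl i)| * s = s / a i := by
  simp [iterMapCoeff, abs_of_pos hi, div_eq_inv_mul]

variable {Γ a γ} in
lemma abs_iterMapCoeff_inr_mul {k : Fin n} (hγ : 0 ≤ γ k)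
    (hd : 0 < 1 - γ k * Γ (Sum.inr k) (Sum.inr k)) (s : ℝ) :
    |iterMapCoeff Γ a γ (Sum.inr k)| * s = γ k * s / (1 - γ k * Γ (Sum.inr k) (Sum.inr k)) := by
  simp [iterMapCoeff, abs_of_nonneg (div_nonneg hγ hd.le), div_mul_eq_mul_div]

variable {Γ a γ} in
lemma iterMap_eq_self_of_mulVec_eq (ha : ∀ i, a i ≠ 0)
    (hd : ∀ k, 1 - γ k * Γ (Sum.inr k) (Sum.inr k) ≠ 0) {u : Fin m ⊕ Fin n → ℝ}
    (hu : GammaBar Γ a γ *ᵥ u = bBar n0 α β a γ) :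
    iterMap Γ n0 α β a γ u = u := by
  funext p
  have hrow := congrFun hu p
  cases p with
  | inl i =>
    rw [GammaBar_mulVec_inl] at hrow
    simp only [iterMap, Sum.elim_inl, bBar, bTilde] at hrow ⊢
    field_simp [ha i] at hrow ⊢
    linarith
  | inr k =>
    rw [GammaBar_mulVec_inr] at hrow
    simp only [iterMap, Sum.elim_inr, bBar, bHat] at hrow ⊢
    field_simp [hd k] at hrow ⊢
    linarith

end IterMap

theorem statement14_general (m n : ℕ)
    (Γ : Matrix (Fin m ⊕ Fin n) (Fin m ⊕ Fin n) ℝ) (hΓ : ∀ i j, 0 ≤ Γ i j)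
    (n0 : Fin m ⊕ Fin n → ℝ) (α β a : Fin m → ℝ) (γ : Fin n → ℝ)
    (hapos : ∀ i, 0 < a i)
    (hγpos : ∀ k, 0 < γ k)
    (hγ : ∀ k : Fin n, γ k * ∑ j, Γ (Sum.inr k) j < 1)
    (ha : ∀ i : Fin m, ∑ j ∈ univ.erase (Sum.inl i), Γ (Sum.inl i) j < a i)
    (σ : ℝ)
    (hσ : σ = max
      (⨆ i : Fin m, (∑ j ∈ univ.erase (Sum.inl i), Γ (Sum.inl i) j) / a i)
      (⨆ k : Fin n, (γ k * ∑ j ∈ univ.erase (Sum.inr k), Γ (Sum.inr k) j) /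
        (1 - γ k * Γ (Sum.inr k) (Sum.inr k))))
    (ustar : Fin m ⊕ Fin n → ℝ)
    (hustar : (GammaBar Γ a γ).mulVec ustar = bBar n0 α β a γ) :
    σ < 1 ∧
    ∀ u : Fin m ⊕ Fin n → ℝ,
      vecNormInf (fun i => iterMap Γ n0 α β a γ u i - ustar i) ≤
        σ * vecNormInf (fun i => u i - ustar i) := by
  have hoff k := mul_sum_erase_lt_one_sub (hγ k) (Sum.inr k)
  have hd : ∀ k, 0 < 1 - γ k * Γ (Sum.inr k) (Sum.inr k) := fun k =>
    (mul_nonneg (hγpos k).le (sum_nonneg fun j _ => hΓ _ j)).trans_lt (hoff k)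
  have hrow : ∀ p, |iterMapCoeff Γ a γ p| * ∑ j ∈ univ.erase p, Γ p j ≤ σ := by
    rintro (i | k) <;> rw [hσ]
    · rw [abs_iterMapCoeff_inl_mul (hapos i)]
      refine le_max_of_le_left ?_
      apply le_ciSup (Finite.bddAbove_range _) i
    · rw [abs_iterMapCoeff_inr_mul (hγpos k).le (hd k)]
      refine le_max_of_le_right ?_
      apply le_ciSup (Finite.bddAbove_range _) k
  have hσ1 : σ < 1 := by
    rw [hσ]
    exact max_lt (Real.iSup_lt_of_forall_lt one_pos fun i => (div_lt_one (hapos i)).2 (ha i))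
      (Real.iSup_lt_of_forall_lt one_pos fun k => (div_lt_one (hd k)).2 (hoff k))
  have hσ0 : 0 ≤ σ := hσ ▸ le_max_of_le_left
    (Real.iSup_nonneg fun i => div_nonneg (sum_nonneg fun j _ => hΓ _ j) (hapos i).le)
  have hfix := iterMap_eq_self_of_mulVec_eq n0 α β (fun i => (hapos i).ne') (fun k => (hd k).ne')
    hustar
  refine ⟨hσ1, fun u => ?_⟩
  have hdiff : (fun p => iterMap Γ n0 α β a γ u p - ustar p) =
      fun p => iterMapCoeff Γ a γ p * ∑ j ∈ univ.erase p, Γ p j * (u j - ustar j) :=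
    funext fun p => by rw [← iterMap_sub_iterMap Γ n0 α β, hfix]
  rw [hdiff]
  exact vecNormInf_scaled_offDiag_le hΓ hσ0 hrow _

/-- σ < 1 and the iteration map is a σ-contraction in the max norm
around the solution u* of Γ̄u* = b̄. -/
theorem statement14 (m n : ℕ) (hm : 0 < m) (hn : 0 < n)
    (Γ : Matrix (Fin m ⊕ Fin n) (Fin m ⊕ Fin n) ℝ) (hΓ : ∀ i j, 0 ≤ Γ i j)
    (n0 : Fin m ⊕ Fin n → ℝ) (α β a : Fin m → ℝ) (γ : Fin n → ℝ)
    (hαpos : ∀ i, 0 < α i) (hβpos : ∀ i, 0 < β i) (hapos : ∀ i, 0 < a i)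
    (hγpos : ∀ k, 0 < γ k)
    (hγ : ∀ k : Fin n, γ k * ∑ j, Γ (Sum.inr k) j < 1)
    (ha : ∀ i : Fin m, ∑ j ∈ univ.erase (Sum.inl i), Γ (Sum.inl i) j < a i)
    (σ : ℝ)
    (hσ : σ = max
      (⨆ i : Fin m, (∑ j ∈ univ.erase (Sum.inl i), Γ (Sum.inl i) j) / a i)
      (⨆ k : Fin n, (γ k * ∑ j ∈ univ.erase (Sum.inr k), Γ (Sum.inr k) j) /
        (1 - γ k * Γ (Sum.inr k) (Sum.inr k))))
    (ustar : Fin m ⊕ Fin n → ℝ)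
    (hustar : (GammaBar Γ a γ).mulVec ustar = bBar n0 α β a γ) :
    σ < 1 ∧
    ∀ u : Fin m ⊕ Fin n → ℝ,
      vecNormInf (fun i => iterMap Γ n0 α β a γ u i - ustar i) ≤
        σ * vecNormInf (fun i => u i - ustar i) :=
  statement14_general m n Γ hΓ n0 α β a γ hapos hγpos hγ ha σ hσ ustar hustar
end

section
/- In the two-user case (m = n = 1, N = 2) with player 1 a game player and player 2 a target seeker, suppose Γ has nonnegative entries, a₁ > Γ₁₂ > 0, γ₂ > 0, γ₂(Γ₂₁ + Γ₂₂) < 1, and n_{0,2} > 0. Let Γ̄ = [[a₁, Γ₁₂], [−Γ₂₁γ₂, 1−Γ₂₂γ₂]] and b̄ = (b̃₁, γ₂ n_{0,2}) with b̃₁ = a₁β₁/α₁ − n_{0,1}. If b̃₁ ≥ 0 and b̃₁/Γ₁₂ ≥ γ₂ n_{0,2}/(1 − γ₂Γ₂₂), then Γ̄ is invertible with det Γ̄ > 0 and the solution u* = Γ̄⁻¹ b̄ is nonnegative componentwise. -/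
open Matrix Finset Filter Topology

/-- two-user case (one game player, one target seeker). Under the stated
conditions Γ̄ is invertible with positive determinant and u* = Γ̄⁻¹b̄ is componentwise
nonnegative. -/
theorem statement18 (Γ : Matrix (Fin 2) (Fin 2) ℝ) (hΓ : ∀ i j, 0 ≤ Γ i j)
    (α1 β1 a1 n01 n02 γ2 : ℝ) (hα1 : 0 < α1) (hβ1 : 0 < β1)
    (hΓ12 : 0 < Γ 0 1) (ha1 : Γ 0 1 < a1)
    (hγ2 : 0 < γ2) (hγsum : γ2 * (Γ 1 0 + Γ 1 1) < 1) (hn02 : 0 < n02)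
    (hb1 : 0 ≤ a1 * β1 / α1 - n01)
    (hcond : γ2 * n02 / (1 - γ2 * Γ 1 1) ≤ (a1 * β1 / α1 - n01) / Γ 0 1) :
    IsUnit (!![a1, Γ 0 1; -(Γ 1 0 * γ2), 1 - Γ 1 1 * γ2]) ∧
    0 < (!![a1, Γ 0 1; -(Γ 1 0 * γ2), 1 - Γ 1 1 * γ2]).det ∧
    ∀ i, 0 ≤ (!![a1, Γ 0 1; -(Γ 1 0 * γ2), 1 - Γ 1 1 * γ2])⁻¹.mulVec
        ![a1 * β1 / α1 - n01, γ2 * n02] i := by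

  set b1 := a1 * β1 / α1 - n01 with hb1def
  have hΓ10 := hΓ 1 0
  have hΓ11 := hΓ 1 1
  have hd : (1 : ℝ) - γ2 * Γ 1 1 > 0 := by nlinarith
  have hdet : (0:ℝ) < (!![a1, Γ 0 1; -(Γ 1 0 * γ2), 1 - Γ 1 1 * γ2]).det := by
    simp [Matrix.det_fin_two_of]
    nlinarith [mul_pos (hΓ12.trans ha1) hd, mul_nonneg (mul_nonneg hΓ12.le hΓ10) hγ2.le]
  have hu : IsUnit (!![a1, Γ 0 1; -(Γ 1 0 * γ2), 1 - Γ 1 1 * γ2]) := by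
    apply Matrix.isUnit_iff_isUnit_det _ |>.mpr
    exact (hdet.ne').isUnit
  refine ⟨hu, hdet, ?_⟩
  have hcond' : γ2 * n02 * Γ 0 1 ≤ b1 * (1 - γ2 * Γ 1 1) := by
    rw [div_le_div_iff₀ hd hΓ12] at hcond
    linarith
  have hinv : (!![a1, Γ 0 1; -(Γ 1 0 * γ2), 1 - Γ 1 1 * γ2])⁻¹ =
      ((!![a1, Γ 0 1; -(Γ 1 0 * γ2), 1 - Γ 1 1 * γ2]).det)⁻¹ •
        !![1 - Γ 1 1 * γ2, -(Γ 0 1); Γ 1 0 * γ2, a1] := by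
    rw [Matrix.inv_def, Matrix.adjugate_fin_two]
    simp [Ring.inverse_eq_inv']
  intro i
  rw [hinv]
  have hdinv : (0:ℝ) ≤ ((!![a1, Γ 0 1; -(Γ 1 0 * γ2), 1 - Γ 1 1 * γ2]).det)⁻¹ :=
    (inv_nonneg).mpr hdet.le
  have ha1' : 0 < a1 := hΓ12.trans ha1
  have hdet' : (0:ℝ) < a1 * (1 - Γ 1 1 * γ2) + Γ 0 1 * (Γ 1 0 * γ2) := by
    nlinarith [mul_pos ha1' hd, mul_nonneg (mul_nonneg hΓ12.le hΓ10) hγ2.le]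
  have hdinv' : (0:ℝ) ≤ (a1 * (1 - Γ 1 1 * γ2) + Γ 0 1 * (Γ 1 0 * γ2))⁻¹ :=
    inv_nonneg.mpr hdet'.le
  fin_cases i <;>
    simp [Matrix.mulVec, dotProduct, Fin.sum_univ_two, smul_eq_mul,
      Matrix.det_fin_two_of]
  · nlinarith [mul_le_mul_of_nonneg_left hcond' hdinv']
  · have h1 : (0:ℝ) ≤ (a1 * (1 - Γ 1 1 * γ2) + Γ 0 1 * (Γ 1 0 * γ2))⁻¹ * (Γ 1 0 * γ2) * b1 :=
      mul_nonneg (mul_nonneg hdinv' (mul_nonneg hΓ10 hγ2.le)) hb1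
    have h2 : (0:ℝ) ≤ (a1 * (1 - Γ 1 1 * γ2) + Γ 0 1 * (Γ 1 0 * γ2))⁻¹ * a1 * (γ2 * n02) :=
      mul_nonneg (mul_nonneg hdinv' ha1'.le) (mul_nonneg hγ2.le hn02.le)
    linarith
end
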